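/- arXiv:2010.10335 — 4 statements merged into one kernel-verified Lean document; each statement's English description precedes it below -/
import Mathlib

section
/- For all natural numbers n, the n-th power of the matrix A·B, where A = [[1,1],[1,2]] and B = [[2,1],[1,1]], equals [[P(2n+1)-P(2n), P(2n)],[2·P(2n), P(2n+1)-P(2n)]], where P denotes the Pell sequence with P(0)=0, P(1)=1, P(n+2)=2·P(n+1)+P(n). -/
/-! The product `A * B = !![3, 2; 4, 3]` is the square of `Q = !![1, 1; 2, 1]`, the matrix of
multiplication by `1 + √2` on `ℤ[√2]`. Since `(1 + √2)^m = (P(m+1) - P(m)) + P(m) √2`, the powers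
of `Q` are read off from the Pell numbers by a one-step induction, and `(A * B)^n = Q^(2n)`. -/

def A : Matrix (Fin 2) (Fin 2) ℤ := !![1,1;1,2]
def B : Matrix (Fin 2) (Fin 2) ℤ := !![2,1;1,1]
/-- matrix of a word: `false` is the letter `a`, `true` is the letter `b` -/
def Mw (w : List Bool) : Matrix (Fin 2) (Fin 2) ℤ :=
  (w.map (fun x => if x then B else A)).prod
/-- the m-value: the top-right entry -/
def mval (w : List Bool) : ℤ := Mw w 0 1
def U : Matrix (Fin 2) (Fin 2) ℤ := !![0,-1;1,0]
def J : Matrix (Fin 2) (Fin 2) ℤ := !![0,1;1,0]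
/-- reversal with letters exchanged -/
def Ebar (w : List Bool) : List Bool := (w.map (fun x => !x)).reverse
def pell : ℕ → ℕ
  | 0 => 0
  | 1 => 1
  | n+2 => 2 * pell (n+1) + pell n

def pellUnitMatrix : Matrix (Fin 2) (Fin 2) ℤ := !![1, 1; 2, 1]

lemma pell_add_two (m : ℕ) : (pell (m + 2) : ℤ) = 2 * pell (m + 1) + pell m := by
  simp only [pell]
  push_cast
  ring

lemma pellUnitMatrix_pow (m : ℕ) :
    pellUnitMatrix ^ m = !![(pell (m + 1) : ℤ) - pell m, (pell m : ℤ);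
                            2 * (pell m : ℤ), (pell (m + 1) : ℤ) - pell m] := by
  induction m with
  | zero => simp [pell, Matrix.one_fin_two]
  | succ m ih =>
    rw [pow_succ, ih, pellUnitMatrix, Matrix.mul_fin_two, pell_add_two]
    ext i j
    fin_cases i <;> fin_cases j <;>
      simp only [Fin.zero_eta, Fin.mk_one, Matrix.of_apply, Matrix.cons_val_zero,
        Matrix.cons_val_one] <;> ring

lemma A_mul_B : A * B = pellUnitMatrix ^ 2 := by
  simp [A, B, pellUnitMatrix, sq]

theorem stmt1 (n : ℕ) :
    (A * B) ^ n = !![(pell (2*n+1) : ℤ) - (pell (2*n) : ℤ), (pell (2*n) : ℤ);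
                     2 * (pell (2*n) : ℤ), (pell (2*n+1) : ℤ) - (pell (2*n) : ℤ)] := by
  rw [A_mul_B, ← pow_mul, pellUnitMatrix_pow]
end

section
/- Let M be the monoid morphism from words over {a,b} to 2×2 integer matrices with M(a)=[[1,1],[1,2]], M(b)=[[2,1],[1,1]], and define the m-value of a word w as the top-right entry of M(w). Then for any word w, the m-value of Ē(w) (the reversal of w with letters a and b exchanged) equals the m-value of w. -/
/- Transposition reverses products and conjugation by the involution `J` preserves them, while
`J * Mᵀ * J` exchanges the letter matrices `A` and `B`. Hence `Mw (Ebar w) = J * (Mw w)ᵀ * J`,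
and conjugating by `J` swaps both the rows and the columns, moving the top-right entry of `(Mw w)ᵀ`
back to the top-right. -/

open scoped Matrix

theorem List.prod_map_conj_of_mul_self_eq_one {M : Type*} [Monoid M] {p : M} (hp : p * p = 1)
    (l : List M) : (l.map fun x => p * x * p).prod = p * l.prod * p := by
  induction l with
  | nil => simp [hp]
  | cons x l ih =>
    rw [List.map_cons, List.prod_cons, ih, List.prod_cons]
    calc p * x * p * (p * l.prod * p) = p * x * (p * p) * l.prod * p := by simp only [mul_assoc]
      _ = p * (x * l.prod) * p := by rw [hp, mul_one, mul_assoc p x]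

theorem J_mul_J : J * J = 1 := by
  ext i j; fin_cases i <;> fin_cases j <;> rfl

theorem letter_matrix_not (x : Bool) :
    (if !x then B else A) = J * (if x then B else A)ᵀ * J := by
  cases x <;> ext i j <;> fin_cases i <;> fin_cases j <;> rfl

theorem Mw_Ebar (w : List Bool) : Mw (Ebar w) = J * (Mw w)ᵀ * J := by
  rw [Mw, Mw, Matrix.transpose_list_prod, ← List.prod_map_conj_of_mul_self_eq_one J_mul_J]
  simp only [Ebar, List.map_reverse, List.map_map, Function.comp_def, letter_matrix_not]

theorem J_mul_transpose_mul_J_apply_zero_one (X : Matrix (Fin 2) (Fin 2) ℤ) :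
    (J * Xᵀ * J) 0 1 = X 0 1 := by
  simp only [J, Matrix.mul_apply, Fin.sum_univ_two, Matrix.transpose_apply]
  simp

theorem stmt5 (w : List Bool) : mval (Ebar w) = mval w := by
  rw [mval, Mw_Ebar, J_mul_transpose_mul_J_apply_zero_one, mval]
end

section
/- Let A = [[1,1],[1,2]], B = [[2,1],[1,1]], and let z be any word over {a,b} with associated matrix product M(z). Then there exists a positive integer t such that A·M(z)·B − B·M(z̄)·A = t·U, where z̄ is the reversal of z and U = [[0,-1],[1,0]]. -/
namespace Matrix

variable {n R : Type*} [Fintype n] [DecidableEq n] [Semiring R] [PartialOrder R]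
  [IsOrderedRing R]

def nonnegOneLeDiagSubmonoid : Submonoid (Matrix n n R) where
  carrier := {P | (∀ i j, 0 ≤ P i j) ∧ ∀ i, 1 ≤ P i i}
  one_mem' := ⟨fun i j => by by_cases h : i = j <;> simp [one_apply, h], fun i => by simp⟩
  mul_mem' := by
    rintro P Q ⟨hP, hPd⟩ ⟨hQ, hQd⟩
    refine ⟨fun i j => Finset.sum_nonneg fun k _ => mul_nonneg (hP i k) (hQ k j), fun i => ?_⟩
    calc 1 ≤ P i i * Q i i := one_le_mul_of_one_le_of_one_le (hPd i) (hQd i)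
      _ ≤ (P * Q) i i :=
        Finset.single_le_sum (fun k _ => mul_nonneg (hP i k) (hQ k i)) (Finset.mem_univ i)

end Matrix

open Matrix

lemma A_mul_mul_B_sub_B_mul_transpose_mul_A (P : Matrix (Fin 2) (Fin 2) ℤ) :
    A * P * B - B * Pᵀ * A = (P 0 0 + 3 * P 1 0 + P 1 1) • U := by
  ext i j
  fin_cases i <;> fin_cases j <;>
    simp [A, B, U, mul_apply, Fin.sum_univ_two, vecMul, dotProduct] <;> ring

lemma A_transpose : Aᵀ = A := by
  ext i j; fin_cases i <;> fin_cases j <;> rfl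

lemma B_transpose : Bᵀ = B := by
  ext i j; fin_cases i <;> fin_cases j <;> rfl

lemma Mw_reverse (w : List Bool) : Mw w.reverse = (Mw w)ᵀ := by
  have hsymm (x : Bool) : (if x then B else A)ᵀ = if x then B else A := by
    cases x <;> simp [A_transpose, B_transpose]
  simp only [Mw, transpose_list_prod, List.map_map, Function.comp_def, hsymm, List.map_reverse]

lemma A_mem_nonnegOneLeDiagSubmonoid : A ∈ nonnegOneLeDiagSubmonoid := by
  simp [nonnegOneLeDiagSubmonoid, A, Fin.forall_fin_two]

lemma B_mem_nonnegOneLeDiagSubmonoid : B ∈ nonnegOneLeDiagSubmonoid := by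
  simp [nonnegOneLeDiagSubmonoid, B, Fin.forall_fin_two]

lemma Mw_mem_nonnegOneLeDiagSubmonoid (w : List Bool) : Mw w ∈ nonnegOneLeDiagSubmonoid := by
  refine Submonoid.list_prod_mem _ fun P hP => ?_
  obtain ⟨x, -, rfl⟩ := List.mem_map.mp hP
  cases x
  exacts [A_mem_nonnegOneLeDiagSubmonoid, B_mem_nonnegOneLeDiagSubmonoid]

theorem stmt6 (z : List Bool) :
    ∃ t : ℤ, 0 < t ∧ A * Mw z * B - B * Mw z.reverse * A = t • U := by
  obtain ⟨hnonneg, hdiag⟩ := Mw_mem_nonnegOneLeDiagSubmonoid z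
  refine ⟨Mw z 0 0 + 3 * Mw z 1 0 + Mw z 1 1, ?_, ?_⟩
  · linarith [hnonneg 1 0, hdiag 0, hdiag 1]
  · rw [Mw_reverse, A_mul_mul_B_sub_B_mul_transpose_mul_A]
end

section
/- For any word w over {a,b}, the m-value of a·w·b equals the m-value of a·w̄·b, where w̄ is the reversal of w. -/
/-! Both generators are symmetric, so `M(w̄) = M(w)ᵀ`. Since the first row of `M(a)` and the
second column of `M(b)` are both `(1, 1)`, `m(a·w·b)` is the sum of all entries of `M(w)`,
which transposition does not change. -/

open Matrix

lemma Mw_append (u v : List Bool) : Mw (u ++ v) = Mw u * Mw v := by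
  simp [Mw, List.prod_append]

lemma mval_a_append_b (w : List Bool) : mval ([false] ++ w ++ [true]) = ∑ i, ∑ j, Mw w i j := by
  have ha : Mw [false] = A := by simp [Mw]
  have hb : Mw [true] = B := by simp [Mw]
  simp only [mval, Mw_append, ha, hb, mul_apply, Fin.sum_univ_two, A, B, of_apply, cons_val',
    cons_val_zero, cons_val_one, cons_val_fin_one, one_mul, mul_one]
  ring

theorem stmt7 (w : List Bool) :
    mval ([false] ++ w ++ [true]) = mval ([false] ++ w.reverse ++ [true]) := by
  rw [mval_a_append_b, mval_a_append_b, Mw_reverse]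
  exact Finset.sum_comm
end
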